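/- Let x_1,...,x_n be i.i.d. ∼ p(x|y=+1) with r_i = p(y=+1|x_i) > 0, and define β̂_Pconf = π_+ (1 - (1/n) Σ_{i=1}^n max{0, 2 - 1/r_i}). Then E[β̂_Pconf] = β, i.e., β̂_Pconf is an unbiased estimator of the Bayes error. -/

import Mathlib

open MeasureTheory

/-!
Pointwise, `r - r * max 0 (2 - 1 / r) = min r (1 - r)` for `r ∈ [0, 1]`. Each `xᵢ` has law
`p(x | y = +1) = η μ / π₊`, so `π₊ E[max 0 (2 - 1 / η(xᵢ))] = E_μ[η · max 0 (2 - 1 / η)]`, and by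
linearity `E[β̂] = E_μ[η] - E_μ[η · max 0 (2 - 1 / η)] = E_μ[min η (1 - η)]`.
-/

section Pointwise

variable {r : ℝ}

lemma max_zero_two_sub_one_div_mem_Icc (hr : 0 ≤ r) : max 0 (2 - 1 / r) ∈ Set.Icc (0 : ℝ) 2 :=
  ⟨le_max_left _ _, max_le zero_le_two (by linarith [one_div_nonneg.mpr hr])⟩

lemma sub_mul_max_zero_two_sub_one_div (h0 : 0 ≤ r) (h1 : r ≤ 1) :
    r - r * max 0 (2 - 1 / r) = min r (1 - r) := by
  rcases h0.eq_or_lt with rfl | hr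
  · simp
  have hmul : r * max 0 (2 - 1 / r) = max 0 (2 * r - 1) := by
    rw [mul_max_of_nonneg _ _ hr.le, mul_zero, mul_sub, mul_one_div_cancel hr.ne']
    ring_nf
  rw [hmul]
  rcases le_total (2 * r - 1) 0 with hle | hle
  · rw [max_eq_left hle, min_eq_left (by linarith), sub_zero]
  · rw [max_eq_right hle, min_eq_right (by linarith)]
    ring

end Pointwise

section Density

variable {α E : Type*} [MeasurableSpace α] [NormedAddCommGroup E] [NormedSpace ℝ E]
  {μ : Measure α} {f : α → ℝ}

theorem integral_withDensity_ofReal (hf : Measurable f) (hf0 : ∀ᵐ x ∂μ, 0 ≤ f x) (g : α → E) :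
    ∫ x, g x ∂μ.withDensity (fun x => ENNReal.ofReal (f x)) = ∫ x, f x • g x ∂μ := by
  rw [integral_withDensity_eq_integral_toReal_smul hf.ennreal_ofReal
    (ae_of_all _ fun _ => ENNReal.ofReal_lt_top)]
  refine integral_congr_ae ?_
  filter_upwards [hf0] with x hx
  rw [ENNReal.toReal_ofReal hx]

theorem integral_inv_smul_withDensity_ofReal (hf : Measurable f) (hf0 : ∀ᵐ x ∂μ, 0 ≤ f x)
    {c : ℝ} (hc : 0 ≤ c) (g : α → E) :
    ∫ x, g x ∂((ENNReal.ofReal c)⁻¹ • μ.withDensity (fun x => ENNReal.ofReal (f x)))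
      = c⁻¹ • ∫ x, f x • g x ∂μ := by
  rw [integral_smul_measure, integral_withDensity_ofReal hf hf0, ENNReal.toReal_inv,
    ENNReal.toReal_ofReal hc]

end Density

section SampleMean

variable {Ω α : Type*} [MeasurableSpace Ω] [MeasurableSpace α] {P : Measure Ω} {ν : Measure α}
  {n : ℕ} {X : Fin n → Ω → α} {g : α → ℝ}

lemma integrable_sampleMean (hX : ∀ i, Measurable (X i)) (hXν : ∀ i, P.map (X i) = ν)
    (hg : Integrable g ν) : Integrable (fun ω => (1 / n : ℝ) * ∑ i, g (X i ω)) P :=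
  (integrable_finsetSum _ fun i _ => ((hXν i).symm ▸ hg).comp_measurable (hX i)).const_mul _

theorem integral_sampleMean (hn : n ≠ 0) (hX : ∀ i, Measurable (X i))
    (hXν : ∀ i, P.map (X i) = ν) (hg : Integrable g ν) :
    ∫ ω, (1 / n : ℝ) * ∑ i, g (X i ω) ∂P = ∫ x, g x ∂ν := by
  have hmean (i : Fin n) : ∫ ω, g (X i ω) ∂P = ∫ x, g x ∂ν := by
    rw [← hXν i, integral_map (hX i).aemeasurable ((hXν i).symm ▸ hg).aestronglyMeasurable]
  rw [integral_const_mul,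
    integral_finsetSum _ fun i _ => ((hXν i).symm ▸ hg).comp_measurable (hX i)]
  simp only [hmean, Finset.sum_const, Finset.card_univ, Fintype.card_fin, nsmul_eq_mul]
  field_simp

end SampleMean

theorem pconf_estimator_unbiased_general
    (d n : ℕ) (hn : 0 < n)
    (Ω : Type*) [MeasurableSpace Ω] (P : Measure Ω) [IsProbabilityMeasure P]
    (μ : Measure (Fin d → ℝ)) [IsProbabilityMeasure μ]
    (η : (Fin d → ℝ) → ℝ) (hη : Measurable η)
    (hη01 : ∀ x, η x ∈ Set.Icc (0 : ℝ) 1)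
    (π : ℝ) (hπ : π = ∫ x, η x ∂μ) (hπpos : 0 < π)
    (μp : Measure (Fin d → ℝ))
    (hμp : μp = (ENNReal.ofReal π)⁻¹ •
      μ.withDensity (fun x => ENNReal.ofReal (η x)))
    (X : Fin n → Ω → (Fin d → ℝ)) (hXmeas : ∀ i, Measurable (X i))
    (hXdist : ∀ i, Measure.map (X i) P = μp) :
    ∫ ω, π * (1 - (1 / n : ℝ) * ∑ i, max 0 (2 - 1 / η (X i ω))) ∂P
      = ∫ x, min (η x) (1 - η x) ∂μ := by
  set g : (Fin d → ℝ) → ℝ := fun x => max 0 (2 - 1 / η x)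
  have hg_norm (x) : ‖g x‖ ≤ 2 := by
    obtain ⟨hg0, hg2⟩ := max_zero_two_sub_one_div_mem_Icc (hη01 x).1
    rwa [Real.norm_of_nonneg hg0]
  have hη_norm (x) : ‖η x‖ ≤ 1 := by rw [Real.norm_of_nonneg (hη01 x).1]; exact (hη01 x).2
  have hg_meas : Measurable g := measurable_const.max (measurable_const.sub (measurable_const.div hη))
  have : IsProbabilityMeasure μp :=
    hXdist ⟨0, hn⟩ ▸ Measure.isProbabilityMeasure_map (hXmeas _).aemeasurable
  have hg_int : Integrable g μp := .of_bound hg_meas.aestronglyMeasurable 2 (ae_of_all _ hg_norm)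
  have hη_int : Integrable η μ := .of_bound hη.aestronglyMeasurable 1 (ae_of_all _ hη_norm)
  have hηg_int : Integrable (fun x => η x * g x) μ :=
    hη_int.mul_bdd hg_meas.aestronglyMeasurable (ae_of_all _ hg_norm)
  calc ∫ ω, π * (1 - (1 / n : ℝ) * ∑ i, g (X i ω)) ∂P
      = π * (1 - ∫ x, g x ∂μp) := by
        rw [integral_const_mul, integral_sub (integrable_const 1)
          (integrable_sampleMean hXmeas hXdist hg_int),
          integral_sampleMean hn.ne' hXmeas hXdist hg_int, integral_const, probReal_univ, one_smul]
    _ = ∫ x, η x ∂μ - ∫ x, η x * g x ∂μ := by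
        rw [hμp, integral_inv_smul_withDensity_ofReal hη (ae_of_all _ fun x => (hη01 x).1) hπpos.le,
          ← hπ]
        simp only [smul_eq_mul]
        field_simp
    _ = ∫ x, min (η x) (1 - η x) ∂μ := by
        rw [← integral_sub hη_int hηg_int]
        exact integral_congr_ae <| ae_of_all _ fun x =>
          sub_mul_max_zero_two_sub_one_div (hη01 x).1 (hη01 x).2

/-- With `x₁,…,xₙ` i.i.d. from the positive class-conditional
`μ₊ = p(x|y=+1)` (density `η/π₊` w.r.t. the marginal `μ`), `rᵢ = η(xᵢ) > 0`,
the estimator `β̂_Pconf = π₊ (1 - (1/n) ∑ᵢ max{0, 2 - 1/rᵢ})` is an unbiased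
estimator of the Bayes error `β = E_{x∼μ}[min{η(x), 1-η(x)}]`. -/
theorem pconf_estimator_unbiased
    (d n : ℕ) (hn : 0 < n)
    (Ω : Type*) [MeasurableSpace Ω] (P : Measure Ω) [IsProbabilityMeasure P]
    (μ : Measure (Fin d → ℝ)) [IsProbabilityMeasure μ]
    (η : (Fin d → ℝ) → ℝ) (hη : Measurable η)
    (hη01 : ∀ x, η x ∈ Set.Icc (0 : ℝ) 1)
    (hpos : ∀ᵐ x ∂μ, 0 < η x)
    (π : ℝ) (hπ : π = ∫ x, η x ∂μ) (hπpos : 0 < π)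
    (μp : Measure (Fin d → ℝ))
    (hμp : μp = (ENNReal.ofReal π)⁻¹ •
      μ.withDensity (fun x => ENNReal.ofReal (η x)))
    (X : Fin n → Ω → (Fin d → ℝ)) (hXmeas : ∀ i, Measurable (X i))
    (hXindep : ProbabilityTheory.iIndepFun X P)
    (hXdist : ∀ i, Measure.map (X i) P = μp)
    (hrpos : ∀ i, ∀ᵐ ω ∂P, 0 < η (X i ω)) :
    ∫ ω, π * (1 - (1 / n : ℝ) * ∑ i, max 0 (2 - 1 / η (X i ω))) ∂P
      = ∫ x, min (η x) (1 - η x) ∂μ :=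
  pconf_estimator_unbiased_general d n hn Ω P μ η hη hη01 π hπ hπpos μp hμp X hXmeas hXdist
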